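/- arXiv:1003.4091 — 4 statements merged into one kernel-verified Lean document; each statement's English description precedes it below -/
import Mathlib

section
/- Let $r,d$ be positive integers with $d$ odd and set $N=rd$. In $\mathbb{Z}[c_1,c_2]$, the element $Q = \left(-\frac{c_1^2}{4}(N-r)(N+r) + N^2 c_2\right)\left(-\frac{c_1^2}{4}(N-r-2)(N+r-2) + (N-2)^2 c_2\right)$ lies in the ideal generated by $r(N-1)c_1$ and $\frac{(N-r)(N-r-2)}{4}c_1^2 - N(N-2)c_2$. -/
open MvPolynomial

/-- In ℤ[c₁,c₂], the element
Q = (-(c₁²/4)(N-r)(N+r) + N²c₂)(-(c₁²/4)(N-r-2)(N+r-2) + (N-2)²c₂)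
lies in the ideal generated by r(N-1)c₁ and ((N-r)(N-r-2)/4)c₁² - N(N-2)c₂. -/
theorem stmt_1 (r d : ℕ) (hr : 0 < r) (hd : 0 < d) (hodd : Odd d)
    (N : ℕ) (hN : N = r * d)
    (c1 c2 Q : MvPolynomial (Fin 2) ℤ)
    (hc1 : c1 = X 0) (hc2 : c2 = X 1)
    (hQ : Q = (-(C ((((N : ℤ) - r) * ((N : ℤ) + r)) / 4)) * c1 ^ 2 + C ((N : ℤ) ^ 2) * c2)
        * (-(C ((((N : ℤ) - r - 2) * ((N : ℤ) + r - 2)) / 4)) * c1 ^ 2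
            + C (((N : ℤ) - 2) ^ 2) * c2)) :
    Q ∈ Ideal.span {C ((r : ℤ) * ((N : ℤ) - 1)) * c1,
      C ((((N : ℤ) - r) * ((N : ℤ) - r - 2)) / 4) * c1 ^ 2
        - C ((N : ℤ) * ((N : ℤ) - 2)) * c2} := by
  obtain ⟨m, hm⟩ := hodd
  have hNint : (N : ℤ) = (r : ℤ) * (2 * (m : ℤ) + 1) := by
    subst hN; push_cast [hm]; ring
  have h1 : (((N : ℤ) - r) * ((N : ℤ) + r)) / 4 = (r : ℤ)^2 * m * (m + 1) := by
    have h : ((N : ℤ) - r) * ((N : ℤ) + r) = 4 * ((r : ℤ)^2 * m * (m + 1)) := by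
      rw [hNint]; ring
    omega
  have h2 : (((N : ℤ) - r - 2) * ((N : ℤ) + r - 2)) / 4
      = ((r : ℤ) * m - 1) * ((r : ℤ) * m + r - 1) := by
    have h : ((N : ℤ) - r - 2) * ((N : ℤ) + r - 2)
        = 4 * (((r : ℤ) * m - 1) * ((r : ℤ) * m + r - 1)) := by
      rw [hNint]; ring
    omega
  have h3 : (((N : ℤ) - r) * ((N : ℤ) - r - 2)) / 4 = (r : ℤ) * m * ((r : ℤ) * m - 1) := by
    have h : ((N : ℤ) - r) * ((N : ℤ) - r - 2) = 4 * ((r : ℤ) * m * ((r : ℤ) * m - 1)) := by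
      rw [hNint]; ring
    omega
  rw [Ideal.mem_span_pair]
  set g2 : MvPolynomial (Fin 2) ℤ :=
    C ((((N : ℤ) - r) * ((N : ℤ) - r - 2)) / 4) * c1 ^ 2
      - C ((N : ℤ) * ((N : ℤ) - 2)) * c2 with hg2
  refine ⟨c1 * (g2 + C ((r : ℤ) * ((N : ℤ) - 1)) * c2), g2, ?_⟩
  rw [hg2, hQ, hc1, hc2, h1, h2, h3, hNint]
  simp only [map_mul, map_add, map_sub, map_pow, map_one, map_ofNat]
  ring
end

section
/- In the ring $R = \mathbb{Z}[c_2,c_3]/(2c_3)$, the intersection of the principal ideal $(2)$ and the principal ideal $(c_3)$ is the zero ideal. -/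
open MvPolynomial

/-- In R = ℤ[c₂,c₃]/(2c₃), the intersection of the principal
ideals (2) and (c₃) is zero. Here c₂ = X 0, c₃ = X 1. -/
theorem stmt_10 :
    Ideal.span {(2 : MvPolynomial (Fin 2) ℤ ⧸
        Ideal.span {(2 : MvPolynomial (Fin 2) ℤ) * X 1})} ⊓
      Ideal.span {Ideal.Quotient.mk
        (Ideal.span {(2 : MvPolynomial (Fin 2) ℤ) * X 1}) (X 1)} = ⊥ := by
  set I : Ideal (MvPolynomial (Fin 2) ℤ) :=
    Ideal.span {(2 : MvPolynomial (Fin 2) ℤ) * X 1} with hI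
  apply le_antisymm _ bot_le
  rintro x hx
  obtain ⟨hx2, hx3⟩ := Submodule.mem_inf.mp hx
  rw [Ideal.mem_span_singleton] at hx2 hx3
  obtain ⟨a, ha⟩ := hx2
  obtain ⟨b, hb⟩ := hx3
  obtain ⟨p, rfl⟩ := Ideal.Quotient.mk_surjective a
  obtain ⟨q, rfl⟩ := Ideal.Quotient.mk_surjective b
  have key : Ideal.Quotient.mk I (X 1 * q - 2 * p) = 0 := by
    rw [map_sub, sub_eq_zero, map_mul, map_mul, map_ofNat, ← hb, ha]
  rw [Ideal.Quotient.eq_zero_iff_mem, hI, Ideal.mem_span_singleton] at key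
  obtain ⟨h, hh⟩ := key
  have hdvd : (2 : MvPolynomial (Fin 2) ℤ) ∣ X 1 * q := by
    refine ⟨p + X 1 * h, ?_⟩
    linear_combination hh
  have h2 : Prime (2 : MvPolynomial (Fin 2) ℤ) := by
    rw [← map_ofNat (C : ℤ →+* MvPolynomial (Fin 2) ℤ) 2]
    exact (prime_C_iff (Fin 2)).mpr Int.prime_two
  have hX : ¬ (2 : MvPolynomial (Fin 2) ℤ) ∣ X 1 := by
    rintro ⟨r, hr⟩
    rw [← map_ofNat (C : ℤ →+* MvPolynomial (Fin 2) ℤ) 2] at hr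
    have := congrArg (MvPolynomial.coeff (Finsupp.single 1 1)) hr
    rw [MvPolynomial.coeff_X, MvPolynomial.coeff_C_mul] at this
    norm_num at this
    omega
  obtain ⟨q', rfl⟩ := (h2.dvd_mul.mp hdvd).resolve_left hX
  rw [Submodule.mem_bot, hb, ← map_mul, Ideal.Quotient.eq_zero_iff_mem, hI]
  have : X 1 * (2 * q') = (2 * X 1) * q' := by ring
  rw [this]
  exact Ideal.mul_mem_right _ _ (Ideal.subset_span rfl)
end

section
/- Let $r$ be an even positive integer, $d$ an even positive integer, and $N = rd$ (so $4 \mid N$). In $\mathbb{Z}[c_1,c_2]$, the element $-r c_1\left(r^2 c_1^2 + \frac{N^2}{4}c_2\right)$ lies in the ideal generated by $2r(N-1)c_1$ and $2r^2 c_1^2 - \frac{N(N-2)}{2}c_2$. -/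
open MvPolynomial

/-- With r,d even positive and N = rd, in ℤ[c₁,c₂] the element
-rc₁(r²c₁² + (N²/4)c₂) lies in the ideal generated by 2r(N-1)c₁ and
2r²c₁² - (N(N-2)/2)c₂. All integer divisions are exact. -/
theorem stmt_11 (r d : ℕ) (hr : 0 < r) (hre : Even r) (hd : 0 < d) (hde : Even d)
    (N : ℕ) (hN : N = r * d)
    (c1 c2 : MvPolynomial (Fin 2) ℤ) (hc1 : c1 = X 0) (hc2 : c2 = X 1) :
    -(C (r : ℤ)) * c1 * (C ((r : ℤ) ^ 2) * c1 ^ 2 + C ((N : ℤ) ^ 2 / 4) * c2) ∈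
      Ideal.span {C (2 * (r : ℤ) * ((N : ℤ) - 1)) * c1,
        C (2 * (r : ℤ) ^ 2) * c1 ^ 2 - C ((N : ℤ) * ((N : ℤ) - 2) / 2) * c2} := by
  obtain ⟨a, ha⟩ := hre
  obtain ⟨b, hb⟩ := hde
  subst hc1 hc2 hN ha hb
  have hNZ : (((a + a) * (b + b) : ℕ) : ℤ) = 4 * (a : ℤ) * (b : ℤ) := by push_cast; ring
  have h1 : (((a + a) * (b + b) : ℕ) : ℤ) ^ 2 / 4 = 4 * (a : ℤ) ^ 2 * (b : ℤ) ^ 2 := by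
    rw [hNZ]
    have : (4 * (a : ℤ) * b) ^ 2 = 4 * (4 * (a : ℤ) ^ 2 * b ^ 2) := by ring
    rw [this, Int.mul_ediv_cancel_left _ (by norm_num)]
  have h2 : (((a + a) * (b + b) : ℕ) : ℤ) * ((((a + a) * (b + b) : ℕ) : ℤ) - 2) / 2
      = 2 * (a : ℤ) * b * (4 * (a : ℤ) * b - 2) := by
    rw [hNZ]
    have : (4 * (a : ℤ) * b) * (4 * (a : ℤ) * b - 2)
        = 2 * (2 * (a : ℤ) * b * (4 * (a : ℤ) * b - 2)) := by ring
    rw [this, Int.mul_ediv_cancel_left _ (by norm_num)]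
  rw [Ideal.mem_span_pair]
  refine ⟨C (-((a : ℤ) * b)) * X 1, C (-(a : ℤ)) * X 0, ?_⟩
  rw [h1, h2, hNZ]
  push_cast
  simp only [map_mul, map_add, map_sub, map_neg, map_ofNat, map_pow, map_one]
  ring
end

section
/- Let $r$ be an odd positive integer, $d$ an even positive integer, $N = rd$. In $\mathbb{Z}[c_1,c_2,c_3]$, the element $p_N(-rc_1)$ (taken as either explicit expression below, depending on $N \bmod 4$) does not lie in the ideal $I = \langle 2c_3,\ 2r(N-1)c_1,\ 2r^2c_1^2 - \frac{N(N-2)}{2}c_2 \rangle$. Here, for $N \equiv 0 \pmod 4$, the expression is $c_1^{\frac{N}{4}+1}(c_1^3 + c_1 c_2 + c_3)^{\frac{N}{4}} - c_1^{\frac{N}{2}-1}(c_1^2+c_2)^{\frac{N}{4}}\left[(r^2+1)c_1^2 + \frac{N^2}{4}c_2\right]$, and for $N \equiv 2 \pmod 4$ it is $c_1^{\frac{N-2}{4}}(c_1^3 + c_2 c_1 + c_3)^{\frac{N+2}{4}} - c_1^{\frac{N}{2}}(c_1^2+c_2)^{\frac{N-2}{4}}\left[(r^2+1)c_1^2 +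 \frac{N^2+4}{4}c_2\right]$. -/
open MvPolynomial

/-- For r odd positive, d even positive, N = rd, in ℤ[c₁,c₂,c₃]
the explicit expression for p_N(-rc₁) (depending on N mod 4) does not lie in
the ideal I = (2c₃, 2r(N-1)c₁, 2r²c₁² - (N(N-2)/2)c₂). -/
theorem stmt_13 (r d : ℕ) (hr : 0 < r) (hro : Odd r) (hd : 0 < d) (hde : Even d)
    (N : ℕ) (hN : N = r * d)
    (c1 c2 c3 : MvPolynomial (Fin 3) ℤ)
    (hc1 : c1 = X 0) (hc2 : c2 = X 1) (hc3 : c3 = X 2)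
    (I : Ideal (MvPolynomial (Fin 3) ℤ))
    (hI : I = Ideal.span {C 2 * c3, C (2 * (r : ℤ) * ((N : ℤ) - 1)) * c1,
      C (2 * (r : ℤ) ^ 2) * c1 ^ 2 - C ((N : ℤ) * ((N : ℤ) - 2) / 2) * c2}) :
    (N % 4 = 0 →
      c1 ^ (N / 4 + 1) * (c1 ^ 3 + c1 * c2 + c3) ^ (N / 4)
        - c1 ^ (N / 2 - 1) * (c1 ^ 2 + c2) ^ (N / 4)
          * (C ((r : ℤ) ^ 2 + 1) * c1 ^ 2 + C ((N : ℤ) ^ 2 / 4) * c2) ∉ I) ∧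
    (N % 4 = 2 →
      c1 ^ ((N - 2) / 4) * (c1 ^ 3 + c2 * c1 + c3) ^ ((N + 2) / 4)
        - c1 ^ (N / 2) * (c1 ^ 2 + c2) ^ ((N - 2) / 4)
          * (C ((r : ℤ) ^ 2 + 1) * c1 ^ 2 + C (((N : ℤ) ^ 2 + 4) / 4) * c2) ∉ I) := by
  set ψ : MvPolynomial (Fin 3) ℤ →ₐ[ℤ] Polynomial (ZMod 2) :=
    aeval (fun i : Fin 3 => if i = 0 then Polynomial.X else 0) with hψ
  have hψ1 : ψ c1 = Polynomial.X := by simp [hψ, hc1]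
  have hψ2 : ψ c2 = 0 := by simp [hψ, hc2]
  have hψ3 : ψ c3 = 0 := by simp [hψ, hc3]
  have hψC : ∀ a : ℤ, ψ (C a) = Polynomial.C ((a : ZMod 2)) := by
    intro a
    simp [hψ, algebraMap_int_eq, Polynomial.C_eq_natCast]
  have hr2 : (((r : ℤ) ^ 2 + 1 : ℤ) : ZMod 2) = 0 := by
    rw [ZMod.intCast_zmod_eq_zero_iff_dvd]
    obtain ⟨k, hk⟩ := hro
    subst hk
    push_cast
    ring_nf
    omega
  have hker : I ≤ RingHom.ker ψ.toRingHom := by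
    rw [hI, Ideal.span_le]
    intro p hp
    simp only [Set.mem_insert_iff, Set.mem_singleton_iff] at hp
    rw [SetLike.mem_coe, RingHom.mem_ker]
    rcases hp with h | h | h <;> subst h
    · show ψ _ = 0
      rw [map_mul, hψ3, mul_zero]
    · show ψ _ = 0
      rw [map_mul, hψC, hψ1]
      have : ((2 * (r : ℤ) * ((N : ℤ) - 1) : ℤ) : ZMod 2) = 0 := by
        rw [ZMod.intCast_zmod_eq_zero_iff_dvd]
        exact ⟨(r : ℤ) * ((N : ℤ) - 1), by ring⟩
      rw [this, Polynomial.C_0, zero_mul]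
    · show ψ _ = 0
      rw [map_sub ψ, map_mul ψ, map_mul ψ, map_pow ψ,
        hψC, hψC, hψ1, hψ2, mul_zero, sub_zero]
      have : ((2 * (r : ℤ) ^ 2 : ℤ) : ZMod 2) = 0 := by
        rw [ZMod.intCast_zmod_eq_zero_iff_dvd]
        exact ⟨(r : ℤ) ^ 2, by ring⟩
      rw [this, Polynomial.C_0, zero_mul]
  constructor
  · intro h4 hmem
    have h0 : ψ (c1 ^ (N / 4 + 1) * (c1 ^ 3 + c1 * c2 + c3) ^ (N / 4)
        - c1 ^ (N / 2 - 1) * (c1 ^ 2 + c2) ^ (N / 4)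
          * (C ((r : ℤ) ^ 2 + 1) * c1 ^ 2 + C ((N : ℤ) ^ 2 / 4) * c2)) = 0 :=
      hker hmem
    simp only [map_sub ψ, map_add ψ, map_mul ψ, map_pow ψ,
      hψ1, hψ2, hψ3, hψC, hr2, Polynomial.C_0, mul_zero, add_zero, zero_mul,
      zero_add, sub_zero, ← pow_mul, ← pow_add] at h0
    have he : N / 4 + 1 + 3 * (N / 4) = N + 1 := by omega
    rw [he] at h0
    exact pow_ne_zero _ Polynomial.X_ne_zero h0
  · intro h4 hmem
    have h0 : ψ (c1 ^ ((N - 2) / 4) * (c1 ^ 3 + c2 * c1 + c3) ^ ((N + 2) / 4)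
        - c1 ^ (N / 2) * (c1 ^ 2 + c2) ^ ((N - 2) / 4)
          * (C ((r : ℤ) ^ 2 + 1) * c1 ^ 2 + C (((N : ℤ) ^ 2 + 4) / 4) * c2)) = 0 :=
      hker hmem
    simp only [map_sub ψ, map_add ψ, map_mul ψ, map_pow ψ,
      hψ1, hψ2, hψ3, hψC, hr2, Polynomial.C_0, mul_zero, add_zero, zero_mul,
      zero_add, sub_zero, ← pow_mul, ← pow_add] at h0
    have he : (N - 2) / 4 + 3 * ((N + 2) / 4) = N + 1 := by omega
    rw [he] at h0
    exact pow_ne_zero _ Polynomial.X_ne_zero h0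
end
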